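/- Let N > 0, K ≥ 0, γ ≥ 0, C₁ ≥ 0, R > 0 be real numbers, let β > 1 and δ ∈ (0,1), and set ε := 2(β−1)/β². Then for all real numbers y ≥ 0 and z such that y − βz ≥ 0 one has (y − z)² − N K y − N(β−1)γ y^{1/2} − (N C₁/R) y^{1/2}(y − βz) ≥ (1/β²)(y − βz)² − (N² C₁² β² / (8(β−1)R²)) (y − βz) − N² K² β² / (4(1−δ)(β−1)²) − (3/4) · (N⁴ β² (β−1)² γ⁴ / (4δ))^{1/3}. -/
import Mathlib

private lemma quad_lower (a b s : ℝ) (ha : 0 < a) :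
    a * s ^ 2 - b * s ≥ -(b ^ 2 / (4 * a)) := by
  rw [ge_iff_le, ← sub_nonneg]
  have h : a * s ^ 2 - b * s - -(b ^ 2 / (4 * a)) = (2 * a * s - b) ^ 2 / (4 * a) := by
    field_simp
    ring
  rw [h]
  positivity

private lemma amgm4 (u v m : ℝ) (hu : 0 ≤ u) (hv : 0 ≤ v) (hm : 0 ≤ m)
    (h : u * v ^ 3 = m ^ 4) : u + 3 * v ≥ 4 * m := by
  rcases eq_or_lt_of_le hv with hv0 | hv0
  · have : m ^ 4 = 0 := by rw [← h, ← hv0]; ring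
    have hm0 : m = 0 := by
      have := pow_eq_zero_iff (n := 4) (by norm_num) |>.mp this
      exact this
    linarith
  · have h1 : 0 ≤ (m - v) ^ 2 * (m ^ 2 + 2 * m * v + 3 * v ^ 2) := by positivity
    have h2 : 0 < v ^ 3 := by positivity
    nlinarith [mul_pos hv0 hv0, sq_nonneg (m - v)]

private lemma quartic_lower (b c s : ℝ) (hb : 0 < b) (hc : 0 ≤ c) (hs : 0 ≤ s) :
    b * s ^ 4 - c * s ≥ -((3 / 4) * (c ^ 4 / (4 * b)) ^ ((1 : ℝ) / 3)) := by
  set T : ℝ := (c ^ 4 / (4 * b)) ^ ((1 : ℝ) / 3) with hT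
  have hbase : 0 ≤ c ^ 4 / (4 * b) := by positivity
  have hT0 : 0 ≤ T := Real.rpow_nonneg hbase _
  have hT3 : T ^ 3 = c ^ 4 / (4 * b) := by
    rw [hT, ← Real.rpow_natCast (( c ^ 4 / (4 * b)) ^ ((1:ℝ)/3)) 3, ← Real.rpow_mul hbase]
    norm_num
  have key : 4 * b * T ^ 3 = c ^ 4 := by
    rw [hT3]; field_simp
  have h : (4 * b * s ^ 4) * T ^ 3 = (c * s) ^ 4 := by
    calc (4 * b * s ^ 4) * T ^ 3 = (4 * b * T ^ 3) * s ^ 4 := by ring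
      _ = c ^ 4 * s ^ 4 := by rw [key]
      _ = (c * s) ^ 4 := by ring
  have := amgm4 (4 * b * s ^ 4) T (c * s) (by positivity) hT0 (by positivity) h
  linarith

/-- The composite pointwise inequality at the heart of the paper's local Li–Yau
gradient estimate on forward complete Finsler metric measure spaces (Theorem 1.3),
with `ε = 2(β−1)/β²` and splitting parameter `δ ∈ (0,1)`. -/
theorem local_gradient_estimate_key_inequality
    (N K γ C₁ R β δ : ℝ)
    (hN : 0 < N) (hK : 0 ≤ K) (hγ : 0 ≤ γ) (hC₁ : 0 ≤ C₁) (hR : 0 < R)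
    (hβ : 1 < β) (hδ0 : 0 < δ) (hδ1 : δ < 1)
    (ε : ℝ) (hε : ε = 2 * (β - 1) / β ^ 2) :
    ∀ y z : ℝ, 0 ≤ y → 0 ≤ y - β * z →
      (y - z) ^ 2 - N * K * y - N * (β - 1) * γ * Real.sqrt y
          - (N * C₁ / R) * Real.sqrt y * (y - β * z) ≥
        (1 / β ^ 2) * (y - β * z) ^ 2
          - (N ^ 2 * C₁ ^ 2 * β ^ 2 / (8 * (β - 1) * R ^ 2)) * (y - β * z)
          - N ^ 2 * K ^ 2 * β ^ 2 / (4 * (1 - δ) * (β - 1) ^ 2)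
          - (3 / 4) * (N ^ 4 * β ^ 2 * (β - 1) ^ 2 * γ ^ 4 / (4 * δ)) ^ ((1 : ℝ) / 3) := by
  intro y z hy hw
  have hβ1 : 0 < β - 1 := by linarith
  have hβ0 : 0 < β := by linarith
  have hβ2 : (0:ℝ) < β ^ 2 := by positivity
  have hδ' : 0 < 1 - δ := by linarith
  set s : ℝ := Real.sqrt y with hsdef
  have hs0 : 0 ≤ s := Real.sqrt_nonneg y
  have hs2 : s ^ 2 = y := Real.sq_sqrt hy
  set w : ℝ := y - β * z with hwdef
  have hε0 : 0 < ε := by rw [hε]; positivity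
  -- Step 1: ε y - (N C₁ / R) s ≥ -A, A = N²C₁²β²/(8(β-1)R²)
  have e1 : ε * y - (N * C₁ / R) * s ≥
      -(N ^ 2 * C₁ ^ 2 * β ^ 2 / (8 * (β - 1) * R ^ 2)) := by
    have := quad_lower ε (N * C₁ / R) s hε0
    rw [← hs2]
    have heq : (N * C₁ / R) ^ 2 / (4 * ε) = N ^ 2 * C₁ ^ 2 * β ^ 2 / (8 * (β - 1) * R ^ 2) := by
      rw [hε]; field_simp; ring
    linarith [heq ▸ this]
  have e1w : (ε * y - (N * C₁ / R) * s) * w ≥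
      -(N ^ 2 * C₁ ^ 2 * β ^ 2 / (8 * (β - 1) * R ^ 2)) * w :=
    mul_le_mul_of_nonneg_right e1 hw
  -- Step 2
  have e2 : (1 - δ) * (β - 1) ^ 2 / β ^ 2 * y ^ 2 - N * K * y ≥
      -(N ^ 2 * K ^ 2 * β ^ 2 / (4 * (1 - δ) * (β - 1) ^ 2)) := by
    have ha : 0 < (1 - δ) * (β - 1) ^ 2 / β ^ 2 := by positivity
    have := quad_lower ((1 - δ) * (β - 1) ^ 2 / β ^ 2) (N * K) y ha
    have heq : (N * K) ^ 2 / (4 * ((1 - δ) * (β - 1) ^ 2 / β ^ 2)) =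
        N ^ 2 * K ^ 2 * β ^ 2 / (4 * (1 - δ) * (β - 1) ^ 2) := by
      field_simp
    linarith [heq ▸ this]
  -- Step 3
  have e3 : δ * (β - 1) ^ 2 / β ^ 2 * y ^ 2 - N * (β - 1) * γ * s ≥
      -((3 / 4) * (N ^ 4 * β ^ 2 * (β - 1) ^ 2 * γ ^ 4 / (4 * δ)) ^ ((1 : ℝ) / 3)) := by
    have hb : 0 < δ * (β - 1) ^ 2 / β ^ 2 := by positivity
    have hc : 0 ≤ N * (β - 1) * γ := by positivity
    have := quartic_lower (δ * (β - 1) ^ 2 / β ^ 2) (N * (β - 1) * γ) s hb hc hs0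
    have heq : (N * (β - 1) * γ) ^ 4 / (4 * (δ * (β - 1) ^ 2 / β ^ 2)) =
        N ^ 4 * β ^ 2 * (β - 1) ^ 2 * γ ^ 4 / (4 * δ) := by
      field_simp
    have hy2 : y ^ 2 = s ^ 4 := by rw [← hs2]; ring
    rw [hy2]
    linarith [heq ▸ this]
  -- identity
  have hid : (y - z) ^ 2 =
      (β - 1) ^ 2 / β ^ 2 * y ^ 2 + ε * y * w + (1 / β ^ 2) * w ^ 2 := by
    rw [hε, hwdef]
    field_simp
    ring
  have hsplit : (1 - δ) * (β - 1) ^ 2 / β ^ 2 * y ^ 2 + δ * (β - 1) ^ 2 / β ^ 2 * y ^ 2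
      = (β - 1) ^ 2 / β ^ 2 * y ^ 2 := by ring
  have e1w' : ε * y * w - (N * C₁ / R) * s * w ≥
      -(N ^ 2 * C₁ ^ 2 * β ^ 2 / (8 * (β - 1) * R ^ 2)) * w := by
    have hexp : (ε * y - (N * C₁ / R) * s) * w = ε * y * w - (N * C₁ / R) * s * w := by ring
    linarith [hexp ▸ e1w]
  linarith [e1w', e2, e3, hid, hsplit]
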